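/- For m, n nonnegative integers, not both zero, with m - n + 2 a nonnegative even number, set l = (m-n)/2 + 2 and define F_{m,n}(w_1,...,w_l) = (m!/((m+n)/2 - 1)!) · Σ_{b_1+...+b_l = (m+n)/2 - 1} multinomial((m+n)/2 - 1; b_1,...,b_l)^2 · ∏_i w_i^{2b_i}. Then F_{m+1,n+1} = 2(m+1) · D(F_{m,n}), where D = Σ_i D_{w_i} and D_w sends w^j to w^{j+2}/(j+2) on monomials, extended linearly. -/

import Mathlib

open Finset MvPolynomial

/-- The operator `D_{w_i}` on polynomials: it sends a monomial `w_i^j ⬝ M` to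
`w_i^{j+2}/(j+2) ⬝ M` and is extended linearly. -/
noncomputable def Dw {l : ℕ} (i : Fin l) (p : MvPolynomial (Fin l) ℝ) :
    MvPolynomial (Fin l) ℝ :=
  ∑ d ∈ p.support,
    MvPolynomial.monomial (d + Finsupp.single i 2) (MvPolynomial.coeff d p / ((d i : ℝ) + 2))

/-- The explicit local polynomial `F_{m,n}` in `l = (m-n)/2 + 2` variables,
where `D = (m+n)/2 - 1`:
`F_{m,n} = (m!/D!) ⬝ ∑_{b₁+⋯+b_l = D} multinomial(D; b)² ∏ᵢ wᵢ^{2bᵢ}`. -/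
noncomputable def Fmn (m D l : ℕ) : MvPolynomial (Fin l) ℝ :=
  ((Nat.factorial m : ℝ) / (Nat.factorial D : ℝ)) •
    ∑ b ∈ Finset.Nat.antidiagonalTuple l D,
      ((Nat.multinomial Finset.univ b : ℝ) ^ 2) • ∏ i, (MvPolynomial.X i) ^ (2 * b i)

/-!
Write `F_{m,D} = (m!/D!) ∑_b multinomial(D; b)² w^{2b}`, with `D` the degree. The operator
`D_{w_i}` sends `w^{2b}` to `w^{2(b + e_i)} / (2 b_i + 2)`, and
`(b_i + 1) · multinomial(D + 1; b + e_i) = (D + 1) · multinomial(D; b)`. So, with `c = b + e_i`,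
the coefficient of `w^{2c}` in `D_{w_i} F_{m,D}` is
`(m!/D!) · multinomial(D + 1; c)² · c_i / (2 (D + 1)²)`. It vanishes when `c_i = 0`, so the
shift `b ↦ b + e_i` turns the sum into one over all `c` with `∑ c = D + 1`. Summing over `i`
replaces `c_i` by `∑ c = D + 1`, and multiplying by `2(m + 1)` gives the coefficients of
`F_{m+1,D+1}`.
-/

theorem Nat.add_one_mul_multinomial_add_single {α : Type*} [DecidableEq α] {s : Finset α}
    {i : α} (hi : i ∈ s) (f : α → ℕ) :
    (f i + 1) * Nat.multinomial s (f + Pi.single i 1) =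
      (∑ j ∈ s, f j + 1) * Nat.multinomial s f := by
  have hrest : ∀ j ∈ s.erase i, (f + Pi.single i 1 : α → ℕ) j = f j := fun j hj => by
    simp [ne_of_mem_erase hj]
  rw [← insert_erase hi, Nat.multinomial_insert (notMem_erase i s),
    Nat.multinomial_insert (notMem_erase i s), Nat.multinomial_congr hrest,
    sum_congr rfl hrest, sum_insert (notMem_erase i s)]
  simp only [Pi.add_apply, Pi.single_eq_same]
  rw [add_right_comm (f i) 1, ← mul_assoc, ← mul_assoc, Nat.add_one_mul_choose_eq]
  ring

namespace MvPolynomial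

lemma prod_X_pow_eq_monomial_equivFunOnFinite {σ R : Type*} [Fintype σ] [CommSemiring R]
    (e : σ → ℕ) :
    ∏ i, (X i : MvPolynomial σ R) ^ e i = monomial (Finsupp.equivFunOnFinite.symm e) 1 := by
  rw [prod_X_pow]
  exact congrArg (monomial · 1) (Finsupp.ext fun i => by simp [Finsupp.indicator])

end MvPolynomial

noncomputable def dwLinearMap {l : ℕ} (i : Fin l) :
    MvPolynomial (Fin l) ℝ →ₗ[ℝ] MvPolynomial (Fin l) ℝ :=
  Finsupp.lsum ℝ (fun d => ((d i : ℝ) + 2)⁻¹ • monomial (d + Finsupp.single i 2)) ∘ₗ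
    (AddMonoidAlgebra.coeffLinearEquiv ℝ).toLinearMap

lemma Dw_eq_dwLinearMap {l : ℕ} (i : Fin l) : Dw i = dwLinearMap i := by
  ext p : 1
  simp [Dw, dwLinearMap, sum_def, smul_monomial, div_eq_inv_mul]

lemma Dw_monomial {l : ℕ} (i : Fin l) (d : Fin l →₀ ℕ) (a : ℝ) :
    Dw i (monomial d a) = monomial (d + Finsupp.single i 2) (a / ((d i : ℝ) + 2)) := by
  simp [Dw_eq_dwLinearMap, dwLinearMap, smul_monomial, div_eq_inv_mul]

lemma Dw_sum {l : ℕ} {ι : Type*} (i : Fin l) (s : Finset ι)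
    (p : ι → MvPolynomial (Fin l) ℝ) :
    Dw i (∑ k ∈ s, p k) = ∑ k ∈ s, Dw i (p k) := by
  simp only [Dw_eq_dwLinearMap, map_sum]

lemma Finset.Nat.sum_antidiagonalTuple_add_single {M : Type*} [AddCommMonoid M] {l : ℕ}
    (i : Fin l) (n : ℕ) (g : (Fin l → ℕ) → M) (hg : ∀ c, c i = 0 → g c = 0) :
    ∑ b ∈ antidiagonalTuple l n, g (b + Pi.single i 1) =
      ∑ c ∈ antidiagonalTuple l (n + 1), g c := by
  have hsum (b : Fin l → ℕ) :
      ∑ j, (b + Pi.single i 1 : Fin l → ℕ) j = ∑ j, b j + 1 := by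
    simp [sum_add_distrib]
  have hle {c : Fin l → ℕ} (hc : c i ≠ 0) : Pi.single i 1 ≤ c := fun j => by
    by_cases hj : j = i
    · subst hj; simpa [Nat.one_le_iff_ne_zero] using hc
    · simp [hj]
  rw [← sum_filter_of_ne (s := antidiagonalTuple l (n + 1)) (p := fun c => c i ≠ 0)
    fun c _ hc hci => hc (hg c hci)]
  refine sum_nbij' (· + Pi.single i 1) (· - Pi.single i 1) ?_ ?_ ?_ ?_ fun _ _ => rfl
  · intro b hb
    simp only [mem_filter, mem_antidiagonalTuple] at hb ⊢
    exact ⟨by rw [hsum, hb], by simp⟩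
  · intro c hc
    simp only [mem_filter, mem_antidiagonalTuple] at hc ⊢
    have := hsum (c - Pi.single i 1)
    rw [tsub_add_cancel_of_le (hle hc.2)] at this
    omega
  · intro b _
    simp
  · intro c hc
    exact tsub_add_cancel_of_le (hle (mem_filter.1 hc).2)

section

open Nat

lemma Fmn_eq_sum_monomial (m D l : ℕ) :
    Fmn m D l = ∑ b ∈ Finset.Nat.antidiagonalTuple l D,
      monomial (Finsupp.equivFunOnFinite.symm (2 • b))
        ((m ! : ℝ) / D ! * (multinomial univ b : ℝ) ^ 2) := by
  simp only [Fmn, smul_sum, prod_X_pow_eq_monomial_equivFunOnFinite, smul_monomial, smul_eq_mul,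
    mul_one]
  rfl

lemma Dw_Fmn (m D l : ℕ) (i : Fin l) :
    Dw i (Fmn m D l) = ∑ c ∈ Finset.Nat.antidiagonalTuple l (D + 1),
      monomial (Finsupp.equivFunOnFinite.symm (2 • c))
        ((m ! : ℝ) / D ! * (multinomial univ c : ℝ) ^ 2 * c i / (2 * ((D : ℝ) + 1) ^ 2)) := by
  rw [← Finset.Nat.sum_antidiagonalTuple_add_single i D _ fun c hc => by simp [hc],
    Fmn_eq_sum_monomial, Dw_sum]
  refine sum_congr rfl fun b hb => ?_
  have hexp : Finsupp.equivFunOnFinite.symm (2 • (b + Pi.single i 1)) =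
      Finsupp.equivFunOnFinite.symm (2 • b) + Finsupp.single i 2 := by
    ext j
    by_cases hj : j = i
    · subst hj; simp
    · simp [hj]
  have hmult := Nat.add_one_mul_multinomial_add_single (mem_univ i) b
  rw [Finset.Nat.mem_antidiagonalTuple.1 hb] at hmult
  have hM : (multinomial univ b : ℝ) =
      ((b i : ℝ) + 1) * multinomial univ (b + Pi.single i 1) / ((D : ℝ) + 1) := by
    rw [eq_div_iff (by positivity), mul_comm]
    exact_mod_cast hmult.symm
  rw [Dw_monomial, hexp, hM]
  congr 1
  simp only [Finsupp.coe_equivFunOnFinite_symm, Pi.smul_apply, smul_eq_mul, Pi.add_apply,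
    Pi.single_eq_same]
  push_cast
  field_simp

end

theorem Fmn_recurrence_general (m l D : ℕ) :
    Fmn (m + 1) (D + 1) l = (2 * (m + 1) : ℝ) • ∑ i, Dw i (Fmn m D l) := by
  simp only [Dw_Fmn]
  rw [sum_comm, Fmn_eq_sum_monomial, smul_sum]
  refine sum_congr rfl fun c hc => ?_
  have hsum : ∑ i, (c i : ℝ) = D + 1 := by
    exact_mod_cast Finset.Nat.mem_antidiagonalTuple.1 hc
  rw [← map_sum, smul_monomial, ← sum_div, ← mul_sum, hsum, Nat.factorial_succ,
    Nat.factorial_succ]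
  congr 1
  push_cast
  rw [smul_eq_mul]
  field_simp

theorem Fmn_recurrence (m n l D : ℕ) (hmn : m + n ≠ 0)
    (hl : 2 * l + n = m + 4) (hD : m + n = 2 * (D + 1)) :
    Fmn (m + 1) (D + 1) l = (2 * (m + 1) : ℝ) • ∑ i, Dw i (Fmn m D l) :=
  Fmn_recurrence_general m l D
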